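/- Explicit variance bound and consistency of the Horvitz–Thompson estimator: Given a dependency structure B, suppose in addition that |μ_i(z)| ≤ b for all i and all z ∈ {0,1}^N, and that |B(i)| ≤ c̃ for all i. Then Var(τ̂) ≤ (b²/p + b²/(1−p) + 8 c̃ b²)/N, and consequently, by Chebyshev's inequality, for every ε > 0, P(|τ̂ − τ| ≥ ε) ≤ (b²/p + b²/(1−p) + 8 c̃ b²)/(N ε²). -/

import Mathlib

/-- Expectation with respect to the Bernoulli(p) product measure on `{0,1}^N`. -/
noncomputable def bexp {N : ℕ} (p : ℝ) (f : (Fin N → Bool) → ℝ) : ℝ :=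
  ∑ z : Fin N → Bool, (∏ i, if z i then p else 1 - p) * f z

/-- Variance under the Bernoulli(p) product measure. -/
noncomputable def bvar {N : ℕ} (p : ℝ) (f : (Fin N → Bool) → ℝ) : ℝ :=
  bexp p (fun z => (f z) ^ 2) - (bexp p f) ^ 2

/-- Covariance under the Bernoulli(p) product measure. -/
noncomputable def bcov {N : ℕ} (p : ℝ) (f g : (Fin N → Bool) → ℝ) : ℝ :=
  bexp p (fun z => f z * g z) - bexp p f * bexp p g

/-- A dependency structure. -/
def DepStruct {N : ℕ} (p : ℝ) (μ : Fin N → (Fin N → Bool) → ℝ)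
    (B : Fin N → Finset (Fin N)) : Prop :=
  (∀ i, i ∈ B i) ∧
  ∀ i j : Fin N, j ∉ B i →
    (∀ z : Fin N → Bool, μ i (Function.update z j false) = μ i (Function.update z j true)) ∧
    (∀ z : Fin N → Bool, μ j (Function.update z i false) = μ j (Function.update z i true)) ∧
    (∀ a b : Bool, bcov p (fun z => μ i (Function.update z i a))
        (fun z => μ j (Function.update z j b)) = 0)

/-- Horvitz–Thompson estimator. -/
noncomputable def ht (N : ℕ) (p : ℝ) (μ : Fin N → (Fin N → Bool) → ℝ)
    (z : Fin N → Bool) : ℝ :=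
  (1 / (N * p)) * ∑ i, (if z i then (1 : ℝ) else 0) * μ i z
    - (1 / (N * (1 - p))) * ∑ i, (1 - if z i then (1 : ℝ) else 0) * μ i z

/-- Average marginalized response. -/
noncomputable def amr (N : ℕ) (p : ℝ) (μ : Fin N → (Fin N → Bool) → ℝ) : ℝ :=
  (1 / N) * ∑ i, (bexp p (fun z => μ i (Function.update z i true))
    - bexp p (fun z => μ i (Function.update z i false)))

/-!
Write `N τ̂ = ∑ i, h_i` with `h_i = (Z_i / p) μ_i^{(1)} - ((1 - Z_i) / (1 - p)) μ_i^{(0)}`. As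
`μ_i^{(a)}` does not depend on `Z_i`, the factor in `Z_i` splits off in expectation: `E h_i` is the
`i`-th marginalized response, so `τ̂` is unbiased, and `Var τ̂ = N⁻² ∑_{i,j} Cov(h_i, h_j)`.
For `j ∉ B(i)` the factors in `Z_i` and `Z_j` split off from the covariance too, leaving a
combination of the vanishing `Cov(μ_i^{(a)}, μ_j^{(b)})`. Of the at most `c̃` remaining terms of
row `i`, the diagonal one is at most `E h_i² ≤ b²/p + b²/(1-p)`, and the others at most `8b²`
(`|E h_i h_j| ≤ 4b²`, `|E h_i| ≤ 2b`). Chebyshev's inequality then gives the tail bound.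
-/

open Finset

section DependsOn

variable {ι : Type*} {α : ι → Type*} {β : Type*} {s : Set ι}

lemma DependsOn.apply_update [DecidableEq ι] {f : (Π i, α i) → β} (hf : DependsOn f s) {i : ι}
    (hi : i ∉ s) (x : Π i, α i) (a : α i) : f (Function.update x i a) = f x :=
  hf fun _ hk => Function.update_of_ne (ne_of_mem_of_not_mem hk hi) a x

lemma DependsOn.comp_update [DecidableEq ι] {f : (Π i, α i) → β} (hf : DependsOn f s) (i : ι)
    (a : α i) : DependsOn (fun x => f (Function.update x i a)) (s \ {i}) := by
  refine fun x y hxy => hf fun k hk => ?_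
  rcases eq_or_ne k i with rfl | hki
  · simp
  · simp [Function.update_of_ne hki, hxy k ⟨hk, hki⟩]

lemma DependsOn.mul [Mul β] {f g : (Π i, α i) → β} (hf : DependsOn f s) (hg : DependsOn g s) :
    DependsOn (fun x => f x * g x) s :=
  fun _ _ hxy => congrArg₂ (· * ·) (hf hxy) (hg hxy)

lemma DependsOn.comp_left {γ : Type*} {f : (Π i, α i) → β} (hf : DependsOn f s) (g : β → γ) :
    DependsOn (fun x => g (f x)) s :=
  fun _ _ hxy => congrArg g (hf hxy)

lemma dependsOn_compl_singleton_comp_update [DecidableEq ι] (f : (Π i, α i) → β) (i : ι)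
    (a : α i) : DependsOn (fun x => f (Function.update x i a)) {i}ᶜ := by
  rw [Set.compl_eq_univ_sdiff]
  exact (dependsOn_univ f).comp_update i a

lemma dependsOn_eval {γ : Type*} (i : ι) (g : α i → γ) :
    DependsOn (fun x : Π i, α i => g (x i)) {i} :=
  fun _ _ hxy => congrArg g (hxy i rfl)

lemma dependsOn_compl_singleton_of_update_eq [DecidableEq ι] {f : (ι → Bool) → β} {i : ι}
    (hf : ∀ z, f (Function.update z i false) = f (Function.update z i true)) :
    DependsOn f {i}ᶜ := by
  have hfalse : ∀ z a, f (Function.update z i a) = f (Function.update z i false) := by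
    intro z a
    cases a
    · rfl
    · exact (hf z).symm
  have hupd : ∀ z a, f (Function.update z i a) = f z := fun z a => by
    rw [hfalse, ← hfalse z (z i), Function.update_eq_self]
  intro x y hxy
  have hy : Function.update x i (y i) = y := by
    ext k
    rcases eq_or_ne k i with rfl | hki
    · simp
    · simp [Function.update_of_ne hki, hxy k hki]
  rw [← hy, hupd]

end DependsOn

section Bernoulli

variable {N : ℕ} {p : ℝ}

lemma bexp_add (f g : (Fin N → Bool) → ℝ) :
    bexp p (fun z => f z + g z) = bexp p f + bexp p g := by
  simp only [bexp, mul_add, sum_add_distrib]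

lemma bexp_const_mul (c : ℝ) (f : (Fin N → Bool) → ℝ) :
    bexp p (fun z => c * f z) = c * bexp p f := by
  simp only [bexp, mul_sum, mul_left_comm c]

lemma bexp_sum {ι : Type*} (s : Finset ι) (f : ι → (Fin N → Bool) → ℝ) :
    bexp p (fun z => ∑ i ∈ s, f i z) = ∑ i ∈ s, bexp p (f i) := by
  simp only [bexp, mul_sum]
  exact sum_comm

lemma sum_prod_bernoulli_weight :
    ∑ z : Fin N → Bool, ∏ i, (if z i then p else 1 - p) = 1 := by
  rw [← Fintype.prod_sum fun _ (b : Bool) => if b then p else 1 - p]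
  simp

lemma bexp_const (c : ℝ) : bexp p (fun _ : Fin N → Bool => c) = c := by
  rw [bexp, ← sum_mul, sum_prod_bernoulli_weight, one_mul]

lemma prod_bernoulli_weight_nonneg (hp0 : 0 ≤ p) (hp1 : p ≤ 1) (z : Fin N → Bool) :
    0 ≤ ∏ i, if z i then p else 1 - p :=
  prod_nonneg fun i _ => by split <;> linarith

lemma bexp_mono (hp0 : 0 ≤ p) (hp1 : p ≤ 1) {f g : (Fin N → Bool) → ℝ}
    (h : ∀ z, f z ≤ g z) : bexp p f ≤ bexp p g :=
  sum_le_sum fun z _ =>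
    mul_le_mul_of_nonneg_left (h z) (prod_bernoulli_weight_nonneg hp0 hp1 z)

lemma abs_bexp_le (hp0 : 0 ≤ p) (hp1 : p ≤ 1) (f : (Fin N → Bool) → ℝ) :
    |bexp p f| ≤ bexp p (fun z => |f z|) := by
  refine (abs_sum_le_sum_abs _ _).trans_eq (sum_congr rfl fun z _ => ?_)
  rw [abs_mul, abs_of_nonneg (prod_bernoulli_weight_nonneg hp0 hp1 z)]

lemma abs_bexp_le_of_abs_le (hp0 : 0 ≤ p) (hp1 : p ≤ 1) {f : (Fin N → Bool) → ℝ} {b : ℝ}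
    (hf : ∀ z, |f z| ≤ b) :
    |bexp p f| ≤ b :=
  (abs_bexp_le hp0 hp1 f).trans <| (bexp_mono hp0 hp1 hf).trans_eq (bexp_const b)

lemma bexp_sq_le_of_abs_le (hp0 : 0 ≤ p) (hp1 : p ≤ 1) {f : (Fin N → Bool) → ℝ} {b : ℝ}
    (hf : ∀ z, |f z| ≤ b) :
    bexp p (fun z => f z ^ 2) ≤ b ^ 2 := by
  refine (bexp_mono hp0 hp1 fun z => ?_).trans_eq (bexp_const (b ^ 2))
  rw [← sq_abs]
  exact pow_le_pow_left₀ (abs_nonneg _) (hf z) 2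

lemma bexp_eq_sum_bool (i : Fin N) (F : (Fin N → Bool) → ℝ) :
    bexp p F = ∑ a : Bool, (if a then p else 1 - p) *
      ∑ y : {j // j ≠ i} → Bool, (∏ j, if y j then p else 1 - p) *
        F ((Equiv.funSplitAt i Bool).symm (a, y)) := by
  rw [bexp, ← (Equiv.funSplitAt i Bool).symm.sum_comp, Fintype.sum_prod_type]
  refine sum_congr rfl fun a _ => ?_
  rw [mul_sum]
  refine sum_congr rfl fun y _ => ?_
  rw [← mul_assoc, Fintype.prod_eq_mul_prod_subtype_ne _ i]
  congr 2
  · simp [Equiv.funSplitAt, Equiv.piSplitAt]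
  · exact prod_congr rfl fun j _ => by simp [Equiv.funSplitAt, Equiv.piSplitAt, j.2]

lemma bexp_comp_update (i : Fin N) (a : Bool) (F : (Fin N → Bool) → ℝ) :
    bexp p (fun z => F (Function.update z i a)) =
      ∑ y : {j // j ≠ i} → Bool, (∏ j, if y j then p else 1 - p) *
        F ((Equiv.funSplitAt i Bool).symm (a, y)) := by
  have hsplit : ∀ c y, Function.update ((Equiv.funSplitAt i Bool).symm (c, y)) i a
      = (Equiv.funSplitAt i Bool).symm (a, y) := by
    intro c y
    ext j
    rcases eq_or_ne j i with rfl | hji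
    · simp [Equiv.funSplitAt, Equiv.piSplitAt]
    · simp [Equiv.funSplitAt, Equiv.piSplitAt, hji]
  simp only [bexp_eq_sum_bool i, hsplit, Fintype.sum_bool]
  simp only [if_true, Bool.false_eq_true, if_false]
  ring

lemma bexp_eq_condition_coord (i : Fin N) (F : (Fin N → Bool) → ℝ) :
    bexp p F = p * bexp p (fun z => F (Function.update z i true))
      + (1 - p) * bexp p (fun z => F (Function.update z i false)) := by
  rw [bexp_eq_sum_bool i, Fintype.sum_bool, bexp_comp_update, bexp_comp_update]
  simp

lemma bexp_ite_mul {i : Fin N} {F : (Fin N → Bool) → ℝ} (hF : DependsOn F {i}ᶜ) (s t : ℝ) :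
    bexp p (fun z => (if z i then s else t) * F z) = (p * s + (1 - p) * t) * bexp p F := by
  rw [bexp_eq_condition_coord i]
  simp only [Function.update_self, if_true, Bool.false_eq_true, if_false,
    hF.apply_update (Set.notMem_compl_iff.2 rfl), bexp_const_mul]
  ring

lemma bexp_sub_mean_sq (f : (Fin N → Bool) → ℝ) :
    bexp p (fun z => (f z - bexp p f) ^ 2) = bvar p f := by
  have hexpand : ∀ z, (f z - bexp p f) ^ 2
      = f z ^ 2 + (-(2 * bexp p f) * f z + bexp p f ^ 2) := fun z => by ring
  simp only [hexpand, bexp_add, bexp_const_mul, bexp_const, bvar]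
  ring

lemma bexp_ge_le_bvar_div_sq (hp0 : 0 ≤ p) (hp1 : p ≤ 1) (f : (Fin N → Bool) → ℝ)
    {ε : ℝ} (hε : 0 < ε) :
    bexp p (fun z => if ε ≤ |f z - bexp p f| then (1 : ℝ) else 0) ≤ bvar p f / ε ^ 2 := by
  have hpt : ∀ z, (if ε ≤ |f z - bexp p f| then (1 : ℝ) else 0)
      ≤ ε⁻¹ ^ 2 * (f z - bexp p f) ^ 2 := by
    intro z
    split_ifs with hz
    · rw [inv_pow, ← div_eq_inv_mul, one_le_div (by positivity),
        ← sq_abs (f z - bexp p f)]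
      exact pow_le_pow_left₀ hε.le hz 2
    · positivity
  calc _ ≤ bexp p (fun z => ε⁻¹ ^ 2 * (f z - bexp p f) ^ 2) := bexp_mono hp0 hp1 hpt
    _ = bvar p f / ε ^ 2 := by
      rw [bexp_const_mul, bexp_sub_mean_sq, inv_pow, inv_mul_eq_div]

lemma bcov_add_left (f g h : (Fin N → Bool) → ℝ) :
    bcov p (fun z => f z + g z) h = bcov p f h + bcov p g h := by
  simp only [bcov, add_mul, bexp_add]
  ring

lemma bcov_add_right (f g h : (Fin N → Bool) → ℝ) :
    bcov p f (fun z => g z + h z) = bcov p f g + bcov p f h := by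
  simp only [bcov, mul_add, bexp_add]
  ring

lemma bvar_const_mul_sum {ι : Type*} (s : Finset ι) (c : ℝ) (f : ι → (Fin N → Bool) → ℝ) :
    bvar p (fun z => c * ∑ i ∈ s, f i z) = c ^ 2 * ∑ i ∈ s, ∑ j ∈ s, bcov p (f i) (f j) := by
  have hsq : ∀ z, (c * ∑ i ∈ s, f i z) ^ 2 = c ^ 2 * ∑ i ∈ s, ∑ j ∈ s, f i z * f j z :=
    fun z => by rw [mul_pow, sq (∑ i ∈ s, f i z), sum_mul_sum]
  simp only [bvar, hsq, bexp_const_mul, bexp_sum, bcov, sum_sub_distrib, mul_pow, mul_sub,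
    sq (∑ i ∈ s, bexp p (f i)), sum_mul_sum]

lemma bcov_ite_mul_ite_mul {i j : Fin N} (hij : i ≠ j) {X Y : (Fin N → Bool) → ℝ}
    (hX : DependsOn X ({i}ᶜ ∩ {j}ᶜ)) (hY : DependsOn Y ({i}ᶜ ∩ {j}ᶜ)) (s t s' t' : ℝ) :
    bcov p (fun z => (if z i then s else t) * X z) (fun z => (if z j then s' else t') * Y z)
      = (p * s + (1 - p) * t) * (p * s' + (1 - p) * t') * bcov p X Y := by
  have hXY : DependsOn (fun z => X z * Y z) ({i}ᶜ ∩ {j}ᶜ) := hX.mul hY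
  have hjXY : DependsOn (fun z => (if z j then s' else t') * (X z * Y z)) {i}ᶜ :=
    ((dependsOn_eval j fun b : Bool => if b then s' else t').mono (by simpa using hij)).mul
      (hXY.mono Set.inter_subset_left)
  have hmul : ∀ z, (if z i then s else t) * X z * ((if z j then s' else t') * Y z)
      = (if z i then s else t) * ((if z j then s' else t') * (X z * Y z)) := fun z => by ring
  simp only [bcov, hmul, bexp_ite_mul hjXY, bexp_ite_mul (hXY.mono Set.inter_subset_right),
    bexp_ite_mul (hX.mono Set.inter_subset_left), bexp_ite_mul (hY.mono Set.inter_subset_right)]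
  ring

end Bernoulli

section HorvitzThompson

variable {N : ℕ} {p : ℝ} {μ : Fin N → (Fin N → Bool) → ℝ} {b : ℝ}

/-- `N * ht N p μ = ∑ i, htTerm p μ i`. Writing `μ i z` as `μ_i^{(z i)}` splits each summand into
factors depending on `z i` alone and factors `μ_i^{(a)}` that do not depend on `z i`. -/
noncomputable def htTerm (p : ℝ) (μ : Fin N → (Fin N → Bool) → ℝ) (i : Fin N) :
    (Fin N → Bool) → ℝ :=
  fun z => (if z i then 1 / p else 0) * μ i (Function.update z i true)
    + (if z i then 0 else -(1 / (1 - p))) * μ i (Function.update z i false)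

lemma ht_eq_mul_sum_htTerm (N : ℕ) (p : ℝ) (μ : Fin N → (Fin N → Bool) → ℝ) :
    ht N p μ = fun z => (1 / N : ℝ) * ∑ i, htTerm p μ i z := by
  funext z
  have hterm : ∀ i, htTerm p μ i z = 1 / p * ((if z i then 1 else 0) * μ i z)
      - 1 / (1 - p) * ((1 - if z i then 1 else 0) * μ i z) := by
    intro i
    have hz : ∀ a, z i = a → Function.update z i a = z := fun a h =>
      h ▸ Function.update_eq_self i z
    cases hzi : z i <;> simp [htTerm, hzi, hz _ hzi]
  simp only [ht, hterm, sum_sub_distrib, ← mul_sum, one_div, mul_inv]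
  ring

lemma bexp_htTerm (hp0 : p ≠ 0) (hp1 : p ≠ 1) (i : Fin N) :
    bexp p (htTerm p μ i) = bexp p (fun z => μ i (Function.update z i true))
      - bexp p (fun z => μ i (Function.update z i false)) := by
  unfold htTerm
  rw [bexp_add, bexp_ite_mul (dependsOn_compl_singleton_comp_update _ _ _),
    bexp_ite_mul (dependsOn_compl_singleton_comp_update _ _ _)]
  have hq : 1 - p ≠ 0 := sub_ne_zero.2 hp1.symm
  field_simp
  ring

lemma bexp_ht (hp0 : p ≠ 0) (hp1 : p ≠ 1) : bexp p (ht N p μ) = amr N p μ := by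
  simp only [ht_eq_mul_sum_htTerm, bexp_const_mul, bexp_sum, bexp_htTerm hp0 hp1, amr]

lemma bexp_htTerm_sq_le (hp0 : 0 < p) (hp1 : p < 1) {i : Fin N} (hb : ∀ z, |μ i z| ≤ b) :
    bexp p (fun z => htTerm p μ i z ^ 2) ≤ b ^ 2 / p + b ^ 2 / (1 - p) := by
  have hq : 1 - p ≠ 0 := (sub_pos.2 hp1).ne'
  -- no cross term: the two indicators have disjoint supports
  have hsq : ∀ z, htTerm p μ i z ^ 2
      = (if z i then 1 / p ^ 2 else 0) * μ i (Function.update z i true) ^ 2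
        + (if z i then 0 else 1 / (1 - p) ^ 2) * μ i (Function.update z i false) ^ 2 := by
    intro z
    cases hzi : z i <;> simp only [htTerm, hzi, if_true, Bool.false_eq_true, if_false] <;>
      field_simp <;> ring
  have hdep : ∀ a, DependsOn (fun z => μ i (Function.update z i a) ^ 2) {i}ᶜ :=
    fun a => (dependsOn_compl_singleton_comp_update _ _ _).comp_left (· ^ 2)
  have hμsq : ∀ a, bexp p (fun z => μ i (Function.update z i a) ^ 2) ≤ b ^ 2 :=
    fun a => bexp_sq_le_of_abs_le hp0.le hp1.le fun z => hb _
  simp only [hsq, bexp_add, bexp_ite_mul (hdep _)]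
  calc _ = 1 / p * bexp p (fun z => μ i (Function.update z i true) ^ 2)
        + 1 / (1 - p) * bexp p (fun z => μ i (Function.update z i false) ^ 2) := by
        simp only [mul_zero, add_zero, zero_add]
        field_simp
    _ ≤ 1 / p * b ^ 2 + 1 / (1 - p) * b ^ 2 := by gcongr <;> exact hμsq _
    _ = b ^ 2 / p + b ^ 2 / (1 - p) := by ring

lemma abs_htTerm_le (hp0 : 0 < p) (hp1 : p < 1) {i : Fin N} (hb : ∀ z, |μ i z| ≤ b)
    (z : Fin N → Bool) : |htTerm p μ i z| ≤ (if z i then 1 / p else 1 / (1 - p)) * b := by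
  have hq : 0 < 1 - p := sub_pos.2 hp1
  cases hzi : z i <;> simp only [htTerm, hzi, if_true, Bool.false_eq_true, if_false, zero_mul,
    add_zero, zero_add, abs_neg, abs_mul, abs_of_pos (one_div_pos.2 hp0),
    abs_of_pos (one_div_pos.2 hq)]
  all_goals exact mul_le_mul_of_nonneg_left (hb _) (by positivity)

lemma abs_bexp_htTerm_mul_le (hp0 : 0 < p) (hp1 : p < 1) {i j : Fin N} (hij : i ≠ j)
    (hbi : ∀ z, |μ i z| ≤ b) (hbj : ∀ z, |μ j z| ≤ b) :
    |bexp p (fun z => htTerm p μ i z * htTerm p μ j z)| ≤ 4 * b ^ 2 := by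
  have hq : 0 < 1 - p := sub_pos.2 hp1
  have hb0 : 0 ≤ b := (abs_nonneg _).trans (hbi fun _ => true)
  have hpt : ∀ z, |htTerm p μ i z * htTerm p μ j z| ≤ (if z i then 1 / p else 1 / (1 - p)) *
      ((if z j then 1 / p else 1 / (1 - p)) * b ^ 2) := fun z =>
    calc _ ≤ ((if z i then 1 / p else 1 / (1 - p)) * b)
          * ((if z j then 1 / p else 1 / (1 - p)) * b) := by
          rw [abs_mul]
          exact mul_le_mul (abs_htTerm_le hp0 hp1 hbi z) (abs_htTerm_le hp0 hp1 hbj z)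
            (abs_nonneg _) (mul_nonneg (by split <;> positivity) hb0)
      _ = _ := by ring
  have hjdep :
      DependsOn (fun z : Fin N → Bool => (if z j then 1 / p else 1 / (1 - p)) * b ^ 2) {i}ᶜ :=
    fun _ _ hxy => congrArg (fun a : Bool => (if a then 1 / p else 1 / (1 - p)) * b ^ 2)
      (hxy j hij.symm)
  calc _ ≤ _ := abs_bexp_le hp0.le hp1.le _
    _ ≤ _ := bexp_mono hp0.le hp1.le hpt
    _ = 4 * b ^ 2 := by
      rw [bexp_ite_mul hjdep,
        bexp_ite_mul ((dependsOn_const (b ^ 2)).mono (Set.empty_subset _)), bexp_const]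
      field_simp
      ring

lemma abs_bexp_htTerm_le (hp0 : 0 < p) (hp1 : p < 1) {i : Fin N} (hb : ∀ z, |μ i z| ≤ b) :
    |bexp p (htTerm p μ i)| ≤ 2 * b := by
  rw [bexp_htTerm hp0.ne' hp1.ne]
  refine (abs_sub _ _).trans ?_
  linarith [abs_bexp_le_of_abs_le hp0.le hp1.le fun z => hb (Function.update z i true),
    abs_bexp_le_of_abs_le hp0.le hp1.le fun z => hb (Function.update z i false)]

lemma abs_bcov_htTerm_le (hp0 : 0 < p) (hp1 : p < 1) {i j : Fin N} (hij : i ≠ j)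
    (hbi : ∀ z, |μ i z| ≤ b) (hbj : ∀ z, |μ j z| ≤ b) :
    |bcov p (htTerm p μ i) (htTerm p μ j)| ≤ 8 * b ^ 2 := by
  have hi := abs_bexp_htTerm_le hp0 hp1 hbi
  have hj := abs_bexp_htTerm_le hp0 hp1 hbj
  calc _ ≤ |bexp p (fun z => htTerm p μ i z * htTerm p μ j z)|
        + |bexp p (htTerm p μ i)| * |bexp p (htTerm p μ j)| := by
        rw [bcov, ← abs_mul]
        exact abs_sub _ _
    _ ≤ 4 * b ^ 2 + (2 * b) * (2 * b) := by
        gcongr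
        · exact abs_bexp_htTerm_mul_le hp0 hp1 hij hbi hbj
        · exact (abs_nonneg _).trans hi
    _ = 8 * b ^ 2 := by ring

lemma bcov_htTerm_eq_zero {i j : Fin N} (hij : i ≠ j) (hμi : DependsOn (μ i) {j}ᶜ)
    (hμj : DependsOn (μ j) {i}ᶜ)
    (hcov : ∀ a b : Bool, bcov p (fun z => μ i (Function.update z i a))
      (fun z => μ j (Function.update z j b)) = 0) :
    bcov p (htTerm p μ i) (htTerm p μ j) = 0 := by
  have hdepi : ∀ a, DependsOn (fun z => μ i (Function.update z i a)) ({i}ᶜ ∩ {j}ᶜ) :=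
    fun a => (hμi.comp_update i a).mono fun _ hk => ⟨hk.2, hk.1⟩
  have hdepj : ∀ b, DependsOn (fun z => μ j (Function.update z j b)) ({i}ᶜ ∩ {j}ᶜ) :=
    fun b => (hμj.comp_update j b).mono fun _ hk => hk
  unfold htTerm
  simp only [bcov_add_left, bcov_add_right, bcov_ite_mul_ite_mul hij (hdepi _) (hdepj _), hcov,
    mul_zero, add_zero]

lemma sum_bcov_htTerm_le (hp0 : 0 < p) (hp1 : p < 1) {B : Fin N → Finset (Fin N)}
    (hB : DepStruct p μ B) (hb : ∀ i z, |μ i z| ≤ b) {ctil : ℕ} (hc : ∀ i, #(B i) ≤ ctil)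
    (i : Fin N) :
    ∑ j, bcov p (htTerm p μ i) (htTerm p μ j)
      ≤ b ^ 2 / p + b ^ 2 / (1 - p) + 8 * ctil * b ^ 2 := by
  have hfar : ∀ j ∉ B i, bcov p (htTerm p μ i) (htTerm p μ j) = 0 := fun j hj => by
    obtain ⟨hμi, hμj, hcov⟩ := hB.2 i j hj
    exact bcov_htTerm_eq_zero (fun h => hj (h ▸ hB.1 i))
      (dependsOn_compl_singleton_of_update_eq hμi)
      (dependsOn_compl_singleton_of_update_eq hμj) hcov
  have hnear :
      ∑ j ∈ (B i).erase i, bcov p (htTerm p μ i) (htTerm p μ j) ≤ ctil * (8 * b ^ 2) :=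
    calc _ ≤ #((B i).erase i) • (8 * b ^ 2) := sum_le_card_nsmul _ _ _ fun j hj =>
          (le_abs_self _).trans
            (abs_bcov_htTerm_le hp0 hp1 (mem_erase.1 hj).1.symm (hb i) (hb j))
      _ ≤ ctil * (8 * b ^ 2) := by
          rw [nsmul_eq_mul]
          gcongr
          exact_mod_cast card_erase_le.trans (hc i)
  have hdiag : bcov p (htTerm p μ i) (htTerm p μ i) ≤ b ^ 2 / p + b ^ 2 / (1 - p) := by
    simp only [bcov, ← sq]
    linarith [bexp_htTerm_sq_le hp0 hp1 (hb i), sq_nonneg (bexp p (htTerm p μ i))]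
  rw [← sum_subset (subset_univ (B i)) fun j _ hj => hfar j hj, ← add_sum_erase _ _ (hB.1 i)]
  linarith

lemma bvar_ht_le (hp0 : 0 < p) (hp1 : p < 1) {B : Fin N → Finset (Fin N)}
    (hB : DepStruct p μ B) (hb : ∀ i z, |μ i z| ≤ b) {ctil : ℕ} (hc : ∀ i, #(B i) ≤ ctil) :
    bvar p (ht N p μ) ≤ (b ^ 2 / p + b ^ 2 / (1 - p) + 8 * ctil * b ^ 2) / N := by
  rw [ht_eq_mul_sum_htTerm, bvar_const_mul_sum]
  calc _ ≤ (1 / N : ℝ) ^ 2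
        * ∑ _i : Fin N, (b ^ 2 / p + b ^ 2 / (1 - p) + 8 * ctil * b ^ 2) := by
        gcongr with i
        exact sum_bcov_htTerm_le hp0 hp1 hB hb hc i
    _ = _ := by
        rw [sum_const, card_univ, Fintype.card_fin, nsmul_eq_mul]
        rcases eq_or_ne (N : ℝ) 0 with hN | hN
        · simp [hN]
        · field_simp

end HorvitzThompson

theorem ht_variance_bound_explicit_and_consistency_general
    (N : ℕ) (p : ℝ) (hp0 : 0 < p) (hp1 : p < 1)
    (μ : Fin N → (Fin N → Bool) → ℝ) (B : Fin N → Finset (Fin N))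
    (hB : DepStruct p μ B)
    (b : ℝ) (hb : ∀ i z, |μ i z| ≤ b)
    (ctil : ℕ) (hc : ∀ i, (B i).card ≤ ctil) :
    bvar p (ht N p μ)
        ≤ (b ^ 2 / p + b ^ 2 / (1 - p) + 8 * ctil * b ^ 2) / N
    ∧ ∀ ε : ℝ, 0 < ε →
        bexp p (fun z => if ε ≤ |ht N p μ z - amr N p μ| then (1 : ℝ) else 0)
          ≤ (b ^ 2 / p + b ^ 2 / (1 - p) + 8 * ctil * b ^ 2) / (N * ε ^ 2) := by
  have hvar := bvar_ht_le hp0 hp1 hB hb hc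
  refine ⟨hvar, fun ε hε => ?_⟩
  calc _ ≤ bvar p (ht N p μ) / ε ^ 2 := by
        simpa only [bexp_ht hp0.ne' hp1.ne] using
          bexp_ge_le_bvar_div_sq hp0.le hp1.le (ht N p μ) hε
    _ ≤ _ := by
        rw [← div_div]
        gcongr

/-- Explicit variance bound and consistency of the Horvitz–Thompson estimator:
given a dependency structure with `|μ_i| ≤ b` and `|B(i)| ≤ c̃`,
`Var(τ̂) ≤ (b²/p + b²/(1−p) + 8 c̃ b²)/N`, and by Chebyshev's inequality,
`P(|τ̂ − τ| ≥ ε) ≤ (b²/p + b²/(1−p) + 8 c̃ b²)/(N ε²)` for every `ε > 0`. -/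
theorem ht_variance_bound_explicit_and_consistency
    (N : ℕ) (hN : 1 ≤ N) (p : ℝ) (hp0 : 0 < p) (hp1 : p < 1)
    (μ : Fin N → (Fin N → Bool) → ℝ) (B : Fin N → Finset (Fin N))
    (hB : DepStruct p μ B)
    (b : ℝ) (hb : ∀ i z, |μ i z| ≤ b)
    (ctil : ℕ) (hc : ∀ i, (B i).card ≤ ctil) :
    bvar p (ht N p μ)
        ≤ (b ^ 2 / p + b ^ 2 / (1 - p) + 8 * ctil * b ^ 2) / N
    ∧ ∀ ε : ℝ, 0 < ε →
        bexp p (fun z => if ε ≤ |ht N p μ z - amr N p μ| then (1 : ℝ) else 0)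
          ≤ (b ^ 2 / p + b ^ 2 / (1 - p) + 8 * ctil * b ^ 2) / (N * ε ^ 2) :=
  ht_variance_bound_explicit_and_consistency_general N p hp0 hp1 μ B hB b hb ctil hc
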